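/- Let Q(x) = (y − x)² + p(|x|) for y ∈ ℝ, where p is the MCP penalty p(t) = λt − t²/(2τ) for 0 ≤ t ≤ τλ and p(t) = τλ²/2 for t > τλ, with τ > 1. Then the minimizer of Q is x̂ = y if |y| > λτ, and x̂ = sign(y)(|y| − λ/2)₊/(1 − 1/(2τ)) if |y| ≤ λτ, which never exceeds |y| in absolute value; in particular x̂ = 0 whenever |y| ≤ λ/2. -/
import Mathlib


/-- MCP penalty in closed form: p(t) = λt − t²/(2τ) for 0 ≤ t ≤ τλ, p(t) = τλ²/2 for t > τλ. -/
noncomputable def mcpPen (τ lam t : ℝ) : ℝ :=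
  if t ≤ τ * lam then lam * t - t ^ 2 / (2 * τ) else τ * lam ^ 2 / 2

/-- Minimizing a convex quadratic `c t² + b t` over `t ≥ 0`. -/
private lemma quad_min {c b : ℝ} (hc : 0 < c) {s : ℝ} (hs : s = max (-b / (2 * c)) 0)
    {t : ℝ} (ht : 0 ≤ t) : c * s ^ 2 + b * s ≤ c * t ^ 2 + b * t := by
  rcases le_total (-b / (2 * c)) 0 with h | h
  · have hb : 0 ≤ b := by
      rcases div_nonpos_iff.mp h with ⟨h1, h2⟩ | ⟨h1, h2⟩
      · linarith
      · linarith
    rw [hs, max_eq_right h]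
    have := mul_nonneg hc.le (sq_nonneg t)
    nlinarith [mul_nonneg hb ht]
  · rw [hs, max_eq_left h]
    set s' : ℝ := -b / (2 * c) with hs'
    have hb2 : b = -2 * c * s' := by
      rw [hs']; field_simp
    rw [hb2]
    nlinarith [mul_nonneg hc.le (sq_nonneg (t - s'))]

set_option maxHeartbeats 1000000 in
theorem stmt_11 (lam τ y : ℝ) (hlam : 0 < lam) (hτ : 1 < τ) :
    let Q : ℝ → ℝ := fun x => (y - x) ^ 2 + mcpPen τ lam |x|
    let xhat : ℝ :=
      if |y| > lam * τ then y
      else Real.sign y * max (|y| - lam / 2) 0 / (1 - 1 / (2 * τ))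
    (∀ x : ℝ, Q xhat ≤ Q x) ∧ |xhat| ≤ |y| ∧ (|y| ≤ lam / 2 → xhat = 0) := by
  intro Q xhat
  have hQval : ∀ x : ℝ, Q x = (y - x) ^ 2 + mcpPen τ lam |x| := fun _ => rfl
  have hxval : xhat = if |y| > lam * τ then y
      else Real.sign y * max (|y| - lam / 2) 0 / (1 - 1 / (2 * τ)) := rfl
  clear_value Q xhat
  have hτ0 : (0 : ℝ) < τ := by linarith
  have h2τ : (0 : ℝ) < 2 * τ := by linarith
  have hc : (0 : ℝ) < 1 - 1 / (2 * τ) := by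
    have h1 : 1 / (2 * τ) < 1 := by rw [div_lt_one h2τ]; linarith
    linarith
  set c : ℝ := 1 - 1 / (2 * τ) with hcdef
  set M : ℝ := max (|y| - lam / 2) 0 with hMdef
  set F : ℝ → ℝ := fun t => (|y| - t) ^ 2 + mcpPen τ lam t with hFdef
  set that : ℝ := if lam * τ < |y| then |y| else M / c with hthatdef
  have hM0 : 0 ≤ M := le_max_right _ _
  have hy0 : 0 ≤ |y| := abs_nonneg y
  -- quadratic form of F on [0, τλ]
  have hFeq : ∀ t : ℝ, t ≤ τ * lam →
      F t = c * t ^ 2 + (lam - 2 * |y|) * t + y ^ 2 := by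
    intro t htle
    simp only [hFdef, mcpPen, if_pos htle, hcdef]
    have h1 : (|y| - t) ^ 2 = y ^ 2 - 2 * |y| * t + t ^ 2 := by
      rw [sub_sq, sq_abs]
    rw [h1]; field_simp; ring
  -- minimization over [0, τλ] in the case |y| ≤ lam τ
  have hkeyB : |y| ≤ lam * τ → ∀ t : ℝ, 0 ≤ t → t ≤ τ * lam → F (M / c) ≤ F t := by
    intro hyB t ht ht'
    have hMcle : M / c ≤ τ * lam := by
      rw [div_le_iff₀ hc]
      have hceq : τ * lam * c = τ * lam - lam / 2 := by
        rw [hcdef]; field_simp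
      rw [hceq]
      apply max_le <;> nlinarith
    have hs : M / c = max (-(lam - 2 * |y|) / (2 * c)) 0 := by
      have h1 : -(lam - 2 * |y|) / (2 * c) = (|y| - lam / 2) / c := by
        field_simp; ring
      rw [h1, hMdef]
      rcases le_total (|y| - lam / 2) 0 with h | h
      · rw [max_eq_right h, max_eq_right (div_nonpos_iff.mpr (Or.inr ⟨h, hc.le⟩))]
        simp
      · rw [max_eq_left h, max_eq_left (div_nonneg h hc.le)]
    rw [hFeq t ht', hFeq (M / c) hMcle]
    have := quad_min hc hs ht
    linarith
  -- F is larger beyond τλ than at τλ, when |y| ≤ lam τ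
  have hFhigh : |y| ≤ lam * τ → ∀ t : ℝ, τ * lam < t → F (τ * lam) ≤ F t := by
    intro hyB t ht
    simp only [hFdef, mcpPen, if_neg (not_le.2 ht), if_pos (le_refl (τ * lam))]
    have hp : lam * (τ * lam) - (τ * lam) ^ 2 / (2 * τ) = τ * lam ^ 2 / 2 := by
      field_simp; ring
    rw [hp]
    have h1 : 0 ≤ t - τ * lam := by linarith
    have h2 : 0 ≤ t + τ * lam - 2 * |y| := by nlinarith
    nlinarith [mul_nonneg h1 h2]
  -- global minimization of F over t ≥ 0
  have hFmin : ∀ t : ℝ, 0 ≤ t → F that ≤ F t := by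
    intro t ht
    by_cases hy : lam * τ < |y|
    · rw [hthatdef, if_pos hy]
      have hFy : F |y| = τ * lam ^ 2 / 2 := by
        simp only [hFdef, mcpPen, if_neg (not_le.2 (show τ * lam < |y| by linarith))]
        ring
      rw [hFy]
      by_cases ht' : t ≤ τ * lam
      · rw [hFeq t ht']
        have hnum : 0 ≤ (2 * τ - 1) * t ^ 2 + 2 * τ * (lam - 2 * |y|) * t
            + 2 * τ * y ^ 2 - τ ^ 2 * lam ^ 2 := by
          have h1 : 0 ≤ (|y| - τ * lam) * (|y| + τ * lam - 2 * t) :=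
            mul_nonneg (by linarith) (by linarith)
          have h2 : 0 ≤ (2 * τ - 1) * (t - τ * lam) ^ 2 :=
            mul_nonneg (by linarith) (sq_nonneg _)
          nlinarith [mul_nonneg hτ0.le h1, sq_abs y]
        have heq : c * t ^ 2 + (lam - 2 * |y|) * t + y ^ 2 - τ * lam ^ 2 / 2
            = ((2 * τ - 1) * t ^ 2 + 2 * τ * (lam - 2 * |y|) * t
              + 2 * τ * y ^ 2 - τ ^ 2 * lam ^ 2) / (2 * τ) := by
          rw [hcdef]; field_simp
        have := div_nonneg hnum h2τ.le
        linarith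
      · simp only [hFdef, mcpPen, if_neg ht']
        nlinarith [sq_nonneg (|y| - t)]
    · push_neg at hy
      rw [hthatdef, if_neg (not_lt.2 hy)]
      by_cases ht' : t ≤ τ * lam
      · exact hkeyB hy t ht ht'
      · exact le_trans (hkeyB hy (τ * lam) (by positivity) le_rfl)
          (hFhigh hy t (not_le.1 ht'))
  -- |xhat| = that
  have habs : |xhat| = that := by
    by_cases hy : lam * τ < |y|
    · rw [hxval, if_pos hy, hthatdef, if_pos hy]
    · rw [hxval, if_neg hy, hthatdef, if_neg hy]
      rw [abs_div, abs_of_pos hc, abs_mul, abs_of_nonneg hM0]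
      rcases lt_trichotomy y 0 with h | h | h
      · rw [Real.sign_of_neg h]; simp
      · have hMz : M = 0 := by
          rw [hMdef, h, abs_zero, max_eq_right (by linarith)]
        rw [hMz]; simp
      · rw [Real.sign_of_pos h]; simp
  -- (y - xhat)² = (|y| - that)²
  have hsq : (y - xhat) ^ 2 = (|y| - that) ^ 2 := by
    by_cases hy : lam * τ < |y|
    · rw [hxval, if_pos hy, hthatdef, if_pos hy]
      rcases abs_choice y with h | h <;> rw [h] <;> ring
    · rw [hxval, if_neg hy, hthatdef, if_neg hy]
      rcases lt_trichotomy y 0 with h | h | h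
      · rw [Real.sign_of_neg h, abs_of_neg h]; ring
      · have hMz : M = 0 := by
          rw [hMdef, h, abs_zero, max_eq_right (by linarith)]
        rw [hMz, h, abs_zero]; simp
      · rw [Real.sign_of_pos h, abs_of_pos h]; ring
  refine ⟨?_, ?_, ?_⟩
  · intro x
    have hQx : F |x| ≤ Q x := by
      rw [hQval x]
      have h1 := abs_sub_abs_le_abs_sub y x
      have h2 := abs_sub_abs_le_abs_sub x y
      have h3 : (|y| - |x|) ^ 2 ≤ |y - x| ^ 2 := by
        apply sq_le_sq' _ h1
        rw [abs_sub_comm x y] at h2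
        linarith
      rw [sq_abs] at h3
      simp only [hFdef]
      linarith
    have hQxhat : Q xhat = F that := by
      rw [hQval xhat, habs, hsq]
    calc Q xhat = F that := hQxhat
      _ ≤ F |x| := hFmin |x| (abs_nonneg x)
      _ ≤ Q x := hQx
  · rw [habs, hthatdef]
    by_cases hy : lam * τ < |y|
    · rw [if_pos hy]
    · rw [if_neg hy]
      push_neg at hy
      rw [div_le_iff₀ hc]
      apply max_le
      · have h1 : |y| / (2 * τ) ≤ lam / 2 := by
          rw [div_le_iff₀ h2τ]; nlinarith
        have h2 : |y| * c = |y| - |y| / (2 * τ) := by rw [hcdef]; ring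
        linarith
      · positivity
  · intro h
    have hy : ¬ (lam * τ < |y|) :=
      not_lt.2 (le_trans h (by nlinarith))
    have h2 : |y| - lam / 2 ≤ 0 := by linarith
    have hMz : M = 0 := by rw [hMdef]; exact max_eq_right h2
    rw [hxval, if_neg hy, hMz]
    simp
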